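/- Let ⊙ be a pseudo-multiplication and φ the supremum of the set of ⊙-finite elements. Then there are no elements t < φ and t' > φ with t ⊙ t' = φ. -/

import Mathlib

open Set Filter Topology
open scoped ENNReal

/-- A pseudo-multiplication on `[0,∞]`. -/
structure PseudoMul where
  mul : ℝ≥0∞ → ℝ≥0∞ → ℝ≥0∞
  assoc : ∀ a b c, mul (mul a b) c = mul a (mul b c)
  continuousOn : ContinuousOn (fun p : ℝ≥0∞ × ℝ≥0∞ => mul p.1 p.2) (Ioo 0 ⊤ ×ˢ univ)
  continuousOn_left : ∀ t, ContinuousOn (fun s => mul s t) (Ioi 0)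
  mono : ∀ ⦃a b : ℝ≥0∞⦄, a ≤ b → ∀ ⦃c d : ℝ≥0∞⦄, c ≤ d → mul a c ≤ mul b d
  one : ℝ≥0∞
  one_mul : ∀ t, mul one t = t
  eq_zero_of_mul : ∀ s t, mul s t = 0 → s = 0 ∨ t = 0
  zero_mul : ∀ t, mul 0 t = 0
  mul_zero : ∀ t, mul t 0 = 0

/-- The kernel `O(t) = ⨅_{s>0} s ⊙ t`. -/
noncomputable def PseudoMul.O (P : PseudoMul) (t : ℝ≥0∞) : ℝ≥0∞ :=
  ⨅ s ∈ Ioi (0 : ℝ≥0∞), P.mul s t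

/-!
Since `t' > φ` is not `⊙`-finite, and left multiplication by a positive element cannot make
an element `⊙`-finite, every `s ⊙ t'` is at least `φ`; so `O(t') = φ`, attained at `s = t`.
Attainment gives `r ⊙ φ ≥ φ` for `r > 0`, hence `O(φ ⊙ t) ≥ φ ⊙ t > 0` and `φ ⊙ t ≥ φ`.
Continuity of `b ↦ a ⊙ b` at `0` for finite `a` gives `a ⊙ O(z) ≤ O(z)`, so `φ ⊙ φ ≤ φ`.
If `φ ≤ 1_⊙` then `φ ⊙ t ≤ t < φ`; if `1_⊙ ≤ φ` then `t' ≤ (φ ⊙ t) ⊙ t' = φ ⊙ φ ≤ φ`.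
-/

namespace PseudoMul

variable (P : PseudoMul)

noncomputable def finiteSup : ℝ≥0∞ := sSup {t | P.O t = 0}

theorem mul_pos {a b : ℝ≥0∞} (ha : 0 < a) (hb : 0 < b) : 0 < P.mul a b :=
  pos_iff_ne_zero.2 fun h => (P.eq_zero_of_mul a b h).elim ha.ne' hb.ne'

theorem O_le_mul (t : ℝ≥0∞) {s : ℝ≥0∞} (hs : 0 < s) : P.O t ≤ P.mul s t :=
  iInf₂_le s hs

theorem le_O {t c : ℝ≥0∞} (h : ∀ s, 0 < s → c ≤ P.mul s t) : c ≤ P.O t :=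
  le_iInf₂ h

theorem O_mono : Monotone P.O := fun _ _ h =>
  P.le_O fun _ hs => (P.O_le_mul _ hs).trans (P.mono le_rfl h)

theorem O_le_O_mul {x : ℝ≥0∞} (hx : 0 < x) (z : ℝ≥0∞) : P.O z ≤ P.O (P.mul x z) :=
  P.le_O fun s hs => (P.O_le_mul z (P.mul_pos hs hx)).trans_eq (P.assoc s x z)

theorem mul_le_O_mul {a : ℝ≥0∞} (ha : a ≤ P.O a) (b : ℝ≥0∞) :
    P.mul a b ≤ P.O (P.mul a b) :=
  P.le_O fun r hr =>
    (P.mono (ha.trans (P.O_le_mul a hr)) le_rfl).trans_eq (P.assoc r a b)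

theorem O_le_O_O_of_mul_eq_O {t z : ℝ≥0∞} (ht : 0 < t) (h : P.mul t z = P.O z) :
    P.O z ≤ P.O (P.O z) :=
  P.le_O fun r hr => calc
    P.O z ≤ P.mul (P.mul r t) z := P.O_le_mul z (P.mul_pos hr ht)
    _ = P.mul r (P.O z) := by rw [P.assoc, h]

theorem continuous_mul_left {a : ℝ≥0∞} (ha : 0 < a) (ha' : a ≠ ⊤) : Continuous (P.mul a) :=
  P.continuousOn.comp_continuous (continuous_const.prodMk continuous_id)
    fun _ => ⟨⟨ha, ha'.lt_top⟩, trivial⟩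

theorem exists_pos_mul_lt {a r : ℝ≥0∞} (ha : 0 < a) (ha' : a ≠ ⊤) (hr : 0 < r) :
    ∃ s, 0 < s ∧ P.mul a s < r := by
  have hlim : Tendsto (P.mul a) (𝓝[>] 0) (𝓝 0) := by
    simpa only [P.mul_zero] using
      ((P.continuous_mul_left ha ha').tendsto 0).mono_left nhdsWithin_le_nhds
  obtain ⟨s, hsr, hs⟩ := ((hlim.eventually (gt_mem_nhds hr)).and self_mem_nhdsWithin).exists
  exact ⟨s, hs, hsr⟩

theorem mul_O_le_O {a : ℝ≥0∞} (ha : 0 < a) (ha' : a ≠ ⊤) (z : ℝ≥0∞) :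
    P.mul a (P.O z) ≤ P.O z :=
  P.le_O fun r hr => by
    obtain ⟨s, hs, hsr⟩ := P.exists_pos_mul_lt ha ha' hr
    calc P.mul a (P.O z) ≤ P.mul a (P.mul s z) := P.mono le_rfl (P.O_le_mul z hs)
      _ = P.mul (P.mul a s) z := (P.assoc a s z).symm
      _ ≤ P.mul r z := P.mono hsr.le le_rfl

theorem O_eq_zero_of_lt_finiteSup {y : ℝ≥0∞} (hy : y < P.finiteSup) : P.O y = 0 := by
  obtain ⟨u, hu, hyu⟩ := lt_sSup_iff.1 hy
  exact nonpos_iff_eq_zero.1 ((P.O_mono hyu.le).trans_eq hu)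

theorem finiteSup_le_of_O_ne_zero {y : ℝ≥0∞} (hy : P.O y ≠ 0) : P.finiteSup ≤ y :=
  not_lt.1 fun h => hy (P.O_eq_zero_of_lt_finiteSup h)

theorem O_ne_zero_of_finiteSup_lt {z : ℝ≥0∞} (hz : P.finiteSup < z) : P.O z ≠ 0 :=
  fun h => hz.not_ge (le_sSup h)

theorem finiteSup_le_O {z : ℝ≥0∞} (hz : P.finiteSup < z) : P.finiteSup ≤ P.O z :=
  P.le_O fun _ hs => P.finiteSup_le_of_O_ne_zero fun h =>
    P.O_ne_zero_of_finiteSup_lt hz (nonpos_iff_eq_zero.1 (h ▸ P.O_le_O_mul hs z))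

end PseudoMul

theorem no_decomposition (P : PseudoMul) (φ : ℝ≥0∞)
    (hφ : φ = sSup {t : ℝ≥0∞ | P.O t = 0}) :
    ¬ ∃ t t' : ℝ≥0∞, t < φ ∧ φ < t' ∧ P.mul t t' = φ := by
  obtain rfl : φ = P.finiteSup := hφ
  rintro ⟨t, t', ht, ht', hmul⟩
  have hφ0 : 0 < P.finiteSup := pos_of_gt ht
  have ht0 : 0 < t := pos_iff_ne_zero.2 fun h => hφ0.ne (by rw [← hmul, h, P.zero_mul])
  have hO : P.O t' = P.finiteSup :=
    le_antisymm (hmul ▸ P.O_le_mul t' ht0) (P.finiteSup_le_O ht')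
  have hφφ : P.mul P.finiteSup P.finiteSup ≤ P.finiteSup :=
    hO ▸ P.mul_O_le_O hφ0 ht'.ne_top t'
  have hφt : P.finiteSup ≤ P.mul P.finiteSup t := by
    have hφO : P.finiteSup ≤ P.O P.finiteSup :=
      hO ▸ P.O_le_O_O_of_mul_eq_O ht0 (hmul.trans hO.symm)
    exact P.finiteSup_le_of_O_ne_zero
      ((P.mul_pos hφ0 ht0).trans_le (P.mul_le_O_mul hφO t)).ne'
  rcases le_total P.finiteSup P.one with h | h
  · exact (hφt.trans ((P.mono h le_rfl).trans_eq (P.one_mul t))).not_gt ht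
  · refine ht'.not_ge ?_
    calc t' = P.mul P.one t' := (P.one_mul t').symm
      _ ≤ P.mul (P.mul P.finiteSup t) t' := P.mono (h.trans hφt) le_rfl
      _ = P.mul P.finiteSup P.finiteSup := by rw [P.assoc, hmul]
      _ ≤ P.finiteSup := hφφ
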